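/- (Decodability under compositional generalization) For any δ > 0, let Z, R, X be independent random variables, g a predictor, φ a task encoding, and C a composition operator. Assume (i) P[g(φ(Z,R), X) = C(Z)(X)] > 1 − δ, and (ii) for all z ≠ z', P_X[C(z)(X) = C(z')(X)] < 1 − 2√δ. Then there exists a map ψ from the encoding space to the constituent space such that P[ψ(φ(Z,R)) = Z] ≥ 1 − √δ. -/

import Mathlib

open MeasureTheory

/-- Decodability under compositional generalization: if the predictor `g` agrees with the
ground truth with probability `> 1 - δ` and distinct tasks are `2√δ`-separated, then there
is a decoder `ψ` from encodings to constituents with `P [ψ (φ (Z, R)) = Z] ≥ 1 - √δ`. -/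
theorem stmt_7 {𝒵 ℛ 𝒳 E Y : Type*} [Nonempty 𝒵]
    [MeasurableSpace 𝒵] [MeasurableSpace ℛ] [MeasurableSpace 𝒳]
    (μ : Measure (𝒵 × ℛ)) (ν : Measure 𝒳)
    [IsProbabilityMeasure μ] [IsProbabilityMeasure ν]
    (g : E → 𝒳 → Y) (φ : 𝒵 → ℛ → E) (C : 𝒵 → 𝒳 → Y)
    (δ : ℝ) (hδ : 0 < δ)
    (hMeas : MeasurableSet {q : (𝒵 × ℛ) × 𝒳 | g (φ q.1.1 q.1.2) q.2 = C q.1.1 q.2})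
    (h1 : ((μ.prod ν) {q : (𝒵 × ℛ) × 𝒳 | g (φ q.1.1 q.1.2) q.2 = C q.1.1 q.2}).toReal > 1 - δ)
    (h2 : ∀ z z' : 𝒵, z ≠ z' → (ν {x | C z x = C z' x}).toReal < 1 - 2 * Real.sqrt δ) :
    ∃ ψ : E → 𝒵, (μ {p : 𝒵 × ℛ | ψ (φ p.1 p.2) = p.1}).toReal ≥ 1 - Real.sqrt δ := by
  classical
  set s := Real.sqrt δ with hsdef
  have hs : 0 < s := Real.sqrt_pos.mpr hδ
  have hss : s * s = δ := Real.mul_self_sqrt hδ.le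
  set S : Set ((𝒵 × ℛ) × 𝒳) := {q | g (φ q.1.1 q.1.2) q.2 = C q.1.1 q.2} with hSdef
  have hSc : MeasurableSet Sᶜ := hMeas.compl
  -- failure function
  set f : 𝒵 × ℛ → ENNReal := fun p => ν (Prod.mk p ⁻¹' Sᶜ) with hfdef
  have hfmeas : Measurable f := measurable_measure_prodMk_left hSc
  have hprod : (μ.prod ν) Sᶜ = ∫⁻ p, f p ∂μ := Measure.prod_apply hSc
  have hne : (μ.prod ν) S ≠ ⊤ := measure_ne_top _ _
  have hcompl : (μ.prod ν) Sᶜ = 1 - (μ.prod ν) S := prob_compl_eq_one_sub hMeas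
  have hlt : (μ.prod ν) Sᶜ < ENNReal.ofReal δ := by
    rw [ENNReal.lt_ofReal_iff_toReal_lt (by simp [hcompl] : (μ.prod ν) Sᶜ ≠ ⊤)]
    rw [hcompl, ENNReal.toReal_sub_of_le prob_le_one ENNReal.one_ne_top]
    simp only [ENNReal.toReal_one]
    linarith [h1]
  -- Markov
  set B : Set (𝒵 × ℛ) := {p | ENNReal.ofReal s ≤ f p} with hBdef
  have hBmeas : MeasurableSet B := measurableSet_le measurable_const hfmeas
  have hmarkov : ENNReal.ofReal s * μ B ≤ ∫⁻ p, f p ∂μ :=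
    mul_meas_ge_le_lintegral₀ hfmeas.aemeasurable _
  have hμB : μ B < ENNReal.ofReal s := by
    have h0 : ENNReal.ofReal s ≠ 0 := (ENNReal.ofReal_pos.mpr hs).ne'
    have hmul : ENNReal.ofReal s * μ B < ENNReal.ofReal s * ENNReal.ofReal s := by
      calc ENNReal.ofReal s * μ B ≤ (μ.prod ν) Sᶜ := hprod ▸ hmarkov
        _ < ENNReal.ofReal δ := hlt
        _ = ENNReal.ofReal s * ENNReal.ofReal s := by
            rw [← ENNReal.ofReal_mul hs.le, hss]
    exact (ENNReal.mul_lt_mul_iff_right h0 ENNReal.ofReal_ne_top).mp hmul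
  -- define decoder
  set ψ : E → 𝒵 := fun e =>
    if h : ∃ p : 𝒵 × ℛ, p ∈ Bᶜ ∧ φ p.1 p.2 = e then h.choose.1 else Classical.arbitrary 𝒵
    with hψdef
  refine ⟨ψ, ?_⟩
  -- on Bᶜ the decoder succeeds
  have hgood : ∀ p : 𝒵 × ℛ, p ∈ Bᶜ → ψ (φ p.1 p.2) = p.1 := by
    intro p hp
    have hex : ∃ q : 𝒵 × ℛ, q ∈ Bᶜ ∧ φ q.1 q.2 = φ p.1 p.2 := ⟨p, hp, rfl⟩
    simp only [hψdef, dif_pos hex]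
    obtain ⟨hqB, hqφ⟩ := hex.choose_spec
    set q := hex.choose with hq
    -- show q.1 = p.1
    by_contra hne'
    -- sections
    have secmeas : ∀ r : 𝒵 × ℛ, MeasurableSet {x | g (φ r.1 r.2) x = C r.1 x} := by
      intro r
      exact hMeas.preimage (measurable_prodMk_left : Measurable (Prod.mk r))
    set Tq := {x | g (φ q.1 q.2) x = C q.1 x} with hTq
    set Tp := {x | g (φ p.1 p.2) x = C p.1 x} with hTp
    have hfq : f q < ENNReal.ofReal s := not_le.mp hqB
    have hfp : f p < ENNReal.ofReal s := not_le.mp hp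
    have hfqT : f q = ν Tqᶜ := rfl
    have hfpT : f p = ν Tpᶜ := rfl
    have hTqr : (ν Tqᶜ).toReal < s := by
      rw [← hfqT]; exact ENNReal.toReal_lt_of_lt_ofReal hfq
    have hTpr : (ν Tpᶜ).toReal < s := by
      rw [← hfpT]; exact ENNReal.toReal_lt_of_lt_ofReal hfp
    -- intersection is large
    have hmono : ν (Tq ∩ Tp) ≤ ν {x | C q.1 x = C p.1 x} := by
      apply measure_mono
      intro x hx
      have h1x : g (φ q.1 q.2) x = C q.1 x := hx.1
      have h2x : g (φ p.1 p.2) x = C p.1 x := hx.2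
      rw [hqφ] at h1x
      exact h1x.symm.trans h2x
    have hcomplle : (ν (Tq ∩ Tp)ᶜ).toReal ≤ (ν Tqᶜ).toReal + (ν Tpᶜ).toReal := by
      have : ν (Tq ∩ Tp)ᶜ ≤ ν Tqᶜ + ν Tpᶜ := by
        rw [Set.compl_inter]
        exact measure_union_le _ _
      calc (ν (Tq ∩ Tp)ᶜ).toReal ≤ (ν Tqᶜ + ν Tpᶜ).toReal :=
            ENNReal.toReal_mono (by finiteness) this
        _ = (ν Tqᶜ).toReal + (ν Tpᶜ).toReal :=
            ENNReal.toReal_add (measure_ne_top _ _) (measure_ne_top _ _)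
    have hsum : (ν (Tq ∩ Tp)).toReal + (ν (Tq ∩ Tp)ᶜ).toReal = 1 := by
      have := prob_add_prob_compl (μ := ν) ((secmeas q).inter (secmeas p))
      have h' := congrArg ENNReal.toReal this
      rwa [ENNReal.toReal_add (measure_ne_top _ _) (measure_ne_top _ _),
        ENNReal.toReal_one] at h'
    have hbig : (ν (Tq ∩ Tp)).toReal ≥ 1 - 2 * s := by nlinarith
    have hmono' : (ν (Tq ∩ Tp)).toReal ≤ (ν {x | C q.1 x = C p.1 x}).toReal :=
      ENNReal.toReal_mono (measure_ne_top _ _) hmono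
    have := h2 q.1 p.1 hne'
    linarith
  -- conclude
  have hsub : Bᶜ ⊆ {p : 𝒵 × ℛ | ψ (φ p.1 p.2) = p.1} := fun p hp => hgood p hp
  have hBc : (μ Bᶜ).toReal ≥ 1 - s := by
    rw [prob_compl_eq_one_sub hBmeas,
      ENNReal.toReal_sub_of_le prob_le_one ENNReal.one_ne_top, ENNReal.toReal_one]
    have : (μ B).toReal ≤ s := (ENNReal.toReal_le_of_le_ofReal hs.le hμB.le)
    linarith
  calc (1 : ℝ) - s ≤ (μ Bᶜ).toReal := hBc
    _ ≤ (μ {p : 𝒵 × ℛ | ψ (φ p.1 p.2) = p.1}).toReal :=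
        ENNReal.toReal_mono (measure_ne_top _ _) (measure_mono hsub)
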